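/- Let k be a field of characteristic zero, n > 1, λ ∈ k a primitive n-th root of unity, and let P = MvPolynomial (Fin 3) k carry a Poisson bracket ⁅·,·⁆ together with a linear Taft action datum (g, x). If ⁅u₂,u₃⁆ is a constant polynomial (it lies in the image of the constants map C : k → P), then the bracket is trivial: ⁅uᵢ,uⱼ⁆ = 0 for all i, j, and consequently ⁅p,q⁆ = 0 for all p, q ∈ P. -/

import Mathlib

open MvPolynomial

section Aux

variable {k : Type*} [Field k]

/-- The exponent shift performed by the skew derivation `x` on monomials. -/
noncomputable def taftShift (d : Fin 3 →₀ ℕ) : Fin 3 →₀ ℕ :=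
  d - Finsupp.single 0 1 + Finsupp.single 1 1

lemma taftShift_apply (d : Fin 3 →₀ ℕ) (i : Fin 3) :
    taftShift d i = d i - (Finsupp.single (0 : Fin 3) 1) i + (Finsupp.single (1 : Fin 3) 1) i := by
  simp [taftShift]

lemma taftShift_ne_zero (d : Fin 3 →₀ ℕ) : taftShift d ≠ 0 := by
  intro h
  have := congrArg (fun f : Fin 3 →₀ ℕ => f 1) h
  simp [taftShift_apply] at this

lemma taftShift_inj {d d' : Fin 3 →₀ ℕ} (hd : 1 ≤ d 0) (hd' : 1 ≤ d' 0)
    (h : taftShift d = taftShift d') : d = d' := by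
  ext i
  have hi := congrArg (fun f : Fin 3 →₀ ℕ => f i) h
  simp only [taftShift_apply] at hi
  have hi' : d i - (Finsupp.single (0 : Fin 3) 1) i = d' i - (Finsupp.single (0 : Fin 3) 1) i :=
    Nat.add_right_cancel hi
  by_cases h0 : i = 0
  · subst h0
    simp only [Finsupp.single_eq_same] at hi'
    omega
  · simpa [Finsupp.single_apply, Ne.symm h0] using hi'

lemma monomial_eq_fin3 (d : Fin 3 →₀ ℕ) (c : k) :
    (monomial d c : MvPolynomial (Fin 3) k) = C c * X 0 ^ d 0 * X 1 ^ d 1 * X 2 ^ d 2 := by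
  rw [monomial_eq, Finsupp.prod_fintype _ _ (fun i => pow_zero _), Fin.prod_univ_three]
  ring

end Aux

/-- If a Taft algebra `T_n(λ)` acts linearly (in the standard form) on a Poisson polynomial
algebra `k[u₁,u₂,u₃]` and `⁅u₂,u₃⁆` is a constant, then the Poisson bracket is trivial. -/
theorem taft_const_bracket_trivial {k : Type*} [Field k] [CharZero k]
    {n : ℕ} (hn : 1 < n) {lam : k} (hlam : IsPrimitiveRoot lam n)
    (B : MvPolynomial (Fin 3) k → MvPolynomial (Fin 3) k → MvPolynomial (Fin 3) k)
    (hB_addl : ∀ a b c, B (a + b) c = B a c + B b c)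
    (hB_addr : ∀ a b c, B a (b + c) = B a b + B a c)
    (hB_smull : ∀ (r : k) (a b), B (r • a) b = r • B a b)
    (hB_smulr : ∀ (r : k) (a b), B a (r • b) = r • B a b)
    (hB_anti : ∀ a b, B a b = -B b a)
    (hB_jac : ∀ a b c, B a (B b c) + B b (B c a) + B c (B a b) = 0)
    (hB_leib : ∀ a b c, B a (b * c) = B a b * c + b * B a c)
    (g : MvPolynomial (Fin 3) k ≃ₐ[k] MvPolynomial (Fin 3) k)
    (hg0 : g (X 0) = lam⁻¹ • X 0)
    (hgi : ∀ i : Fin 3, i ≠ 0 → g (X i) = X i)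
    (hgB : ∀ a b, g (B a b) = B (g a) (g b))
    (x : MvPolynomial (Fin 3) k →ₗ[k] MvPolynomial (Fin 3) k)
    (hx0 : x (X 0) = X 1)
    (hxi : ∀ i : Fin 3, i ≠ 0 → x (X i) = 0)
    (hx_mul : ∀ a b, x (a * b) = g a * x b + x a * b)
    (hxB : ∀ a b, x (B a b) = B (g a) (x b) + B (x a) b)
    (hconst : ∃ r : k, B (X 1) (X 2) = C r) :
    (∀ i j : Fin 3, B (X i) (X j) = 0) ∧
      ∀ p q : MvPolynomial (Fin 3) k, B p q = 0 := by
  classical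
  set l : k := lam⁻¹ with hl
  have hlam' : IsPrimitiveRoot l n := hlam.inv
  have hl1 : l ≠ 1 := hlam'.ne_one hn
  have hlne0 : l ≠ 0 := by
    intro h
    have h2 := hlam'.pow_eq_one
    rw [h, zero_pow (by omega)] at h2
    exact zero_ne_one h2
  set S : ℕ → k := fun a => ∑ i ∈ Finset.range a, l ^ i with hS
  have hSne : ∀ a : ℕ, ¬ (n ∣ a) → S a ≠ 0 := by
    intro a ha
    have hpow : l ^ a ≠ 1 := fun h => ha ((hlam'.pow_eq_one_iff_dvd a).mp h)
    rw [hS]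
    simp only
    rw [geom_sum_eq hl1]
    exact div_ne_zero (sub_ne_zero.mpr hpow) (sub_ne_zero.mpr hl1)
  -- basic bracket facts
  have hB0r : ∀ a, B a 0 = 0 := by
    intro a
    have h := hB_addr a 0 0
    rw [add_zero] at h
    exact (right_eq_add.mp h)
  have hBdiag : ∀ a, B a a = 0 := by
    intro a
    have h : B a a + B a a = 0 := by
      nth_rewrite 1 [hB_anti a a]
      rw [neg_add_cancel]
    have h2 : (2 : k) • B a a = 0 := by rw [two_smul]; exact h
    rcases smul_eq_zero.mp h2 with h3 | h3
    · exact absurd h3 two_ne_zero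
    · exact h3
  have hB1r : ∀ a, B a 1 = 0 := by
    intro a
    have h := hB_leib a 1 1
    rw [mul_one, mul_one, one_mul] at h
    exact right_eq_add.mp h
  have hBCr : ∀ a (c : k), B a (C c) = 0 := by
    intro a c
    rw [← mul_one (C c), ← smul_eq_C_mul, hB_smulr, hB1r, smul_zero]
  -- basic facts about x and g
  have hx1 : x 1 = 0 := by
    have h := hx_mul 1 1
    rw [mul_one, mul_one, map_one g, one_mul] at h
    exact right_eq_add.mp h
  have hxC : ∀ c : k, x (C c) = 0 := by
    intro c
    rw [← mul_one (C c), ← smul_eq_C_mul, map_smul, hx1, smul_zero]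
  have hgC : ∀ c : k, g (C c) = C c := by
    intro c
    rw [← mul_one (C c), ← smul_eq_C_mul, map_smul, map_one, smul_eq_C_mul, mul_one]
  have hg1 : g (X 1) = X 1 := hgi 1 (by decide)
  have hg2 : g (X 2) = X 2 := hgi 2 (by decide)
  have hx1' : x (X 1) = 0 := hxi 1 (by decide)
  have hx2' : x (X 2) = 0 := hxi 2 (by decide)
  -- g on monomials
  have hgmon : ∀ (d : Fin 3 →₀ ℕ) (c : k),
      g (monomial d c) = l ^ (d 0) • monomial d c := by
    intro d c
    rw [monomial_eq_fin3]
    simp only [map_mul, map_pow, hgC, hg0, hg1, hg2, smul_pow]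
    rw [smul_eq_C_mul, smul_eq_C_mul]
    ring
  -- x on powers of X 0
  have hxpow : ∀ a : ℕ, x ((X 0 : MvPolynomial (Fin 3) k) ^ (a + 1)) = S (a + 1) • (X 0 ^ a * X 1) := by
    intro a
    induction a with
    | zero =>
      rw [pow_one, hx0, hS]
      simp
    | succ b ih =>
      have e : (X 0 : MvPolynomial (Fin 3) k) ^ (b + 2) = X 0 * X 0 ^ (b + 1) := by ring
      rw [e, hx_mul, hg0, hx0, ih]
      have hSs : S (b + 2) = l * S (b + 1) + 1 := geom_sum_succ
      rw [hSs, smul_eq_C_mul, smul_eq_C_mul, smul_eq_C_mul, map_add, map_mul, map_one]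
      ring
  -- x kills C c * X1^b * X2^e
  have hxp1 : ∀ b : ℕ, x ((X 1 : MvPolynomial (Fin 3) k) ^ b) = 0 := by
    intro b
    induction b with
    | zero => simpa using hx1
    | succ m ih => rw [pow_succ, hx_mul, ih, hx1', mul_zero, zero_mul, add_zero]
  have hxp2 : ∀ b : ℕ, x ((X 2 : MvPolynomial (Fin 3) k) ^ b) = 0 := by
    intro b
    induction b with
    | zero => simpa using hx1
    | succ m ih => rw [pow_succ, hx_mul, ih, hx2', mul_zero, zero_mul, add_zero]
  have hxM : ∀ (c : k) (b e : ℕ),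
      x ((C c : MvPolynomial (Fin 3) k) * X 1 ^ b * X 2 ^ e) = 0 := by
    intro c b e
    rw [hx_mul (C c * X 1 ^ b) (X 2 ^ e), hxp2, hx_mul (C c) (X 1 ^ b), hxp1, hxC]
    simp
  -- x on monomials
  have hxmon : ∀ (d : Fin 3 →₀ ℕ) (c : k),
      x (monomial d c) = S (d 0) • monomial (taftShift d) c := by
    intro d c
    rcases Nat.eq_zero_or_pos (d 0) with h0 | h0
    · have e : (monomial d c : MvPolynomial (Fin 3) k) = C c * X 1 ^ d 1 * X 2 ^ d 2 := by
        rw [monomial_eq_fin3, h0, pow_zero]; ring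
      rw [e, hxM, h0, hS]
      simp
    · obtain ⟨a, ha⟩ : ∃ a, d 0 = a + 1 := ⟨d 0 - 1, by omega⟩
      have hmono : (monomial d c : MvPolynomial (Fin 3) k)
          = X 0 ^ (a + 1) * (C c * X 1 ^ d 1 * X 2 ^ d 2) := by
        rw [monomial_eq_fin3, ha]; ring
      rw [hmono, hx_mul, hxM, hxpow]
      have hsh : (monomial (taftShift d) c : MvPolynomial (Fin 3) k)
          = C c * X 0 ^ a * X 1 ^ (d 1 + 1) * X 2 ^ d 2 := by
        rw [monomial_eq_fin3]
        have h0' : taftShift d 0 = a := by simp [taftShift_apply, ha, Finsupp.single_apply]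
        have h1' : taftShift d 1 = d 1 + 1 := by simp [taftShift_apply, Finsupp.single_apply]
        have h2' : taftShift d 2 = d 2 := by simp [taftShift_apply, Finsupp.single_apply]
        rw [h0', h1', h2']
      rw [ha, hsh, smul_eq_C_mul, smul_eq_C_mul]
      ring
  -- coefficients of g q
  have hcoeff_g : ∀ (q : MvPolynomial (Fin 3) k) (d : Fin 3 →₀ ℕ),
      coeff d (g q) = l ^ (d 0) * coeff d q := by
    intro q d
    nth_rewrite 1 [q.as_sum]
    rw [map_sum, coeff_sum]
    rw [Finset.sum_eq_single d]
    · rw [hgmon, coeff_smul, coeff_monomial, if_pos rfl, smul_eq_mul]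
    · intro b _ hbd
      rw [hgmon, coeff_smul, coeff_monomial, if_neg hbd, smul_zero]
    · intro hd
      rw [hgmon, coeff_smul, coeff_monomial, if_pos rfl, notMem_support_iff.mp hd]
      simp
  -- coefficients of x q at shifted exponents
  have hcoeff_x : ∀ (q : MvPolynomial (Fin 3) k), (∀ d' ∈ q.support, 1 ≤ d' 0) →
      ∀ d ∈ q.support, coeff (taftShift d) (x q) = S (d 0) * coeff d q := by
    intro q hq d hd
    nth_rewrite 1 [q.as_sum]
    rw [map_sum, coeff_sum]
    rw [Finset.sum_eq_single d]
    · rw [hxmon, coeff_smul, coeff_monomial, if_pos rfl, smul_eq_mul]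
    · intro b hb hbd
      rw [hxmon, coeff_smul, coeff_monomial, if_neg, smul_zero]
      exact fun h => hbd (taftShift_inj (hq b hb) (hq d hd) h)
    · intro hdn
      exact absurd hd hdn
  -- the kernel lemma
  have key : ∀ (q : MvPolynomial (Fin 3) k) (r : k),
      g q = l • q → x q = C r → q = 0 ∧ r = 0 := by
    intro q r hgq hxq
    have hsupp : ∀ d ∈ q.support, ∃ t, d 0 = n * t + 1 := by
      intro d hd
      have h1 : l ^ (d 0) * coeff d q = l * coeff d q := by
        have h := congrArg (coeff d) hgq
        rw [hcoeff_g, coeff_smul] at h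
        exact h
      have hc : coeff d q ≠ 0 := mem_support_iff.mp hd
      have h2 : l ^ (d 0) = l := mul_right_cancel₀ hc h1
      rcases Nat.eq_zero_or_pos (d 0) with h0 | h0
      · rw [h0, pow_zero] at h2
        exact absurd h2.symm hl1
      · obtain ⟨m, hm⟩ : ∃ m, d 0 = m + 1 := ⟨d 0 - 1, by omega⟩
        rw [hm, pow_succ] at h2
        have hlm : l ^ m = 1 :=
          mul_right_cancel₀ hlne0 (h2.trans (one_mul l).symm)
        obtain ⟨t, ht⟩ := (hlam'.pow_eq_one_iff_dvd m).mp hlm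
        exact ⟨t, by omega⟩
    have hsupp1 : ∀ d' ∈ q.support, 1 ≤ d' 0 := by
      intro d hd
      obtain ⟨t, ht⟩ := hsupp d hd
      omega
    have hq0 : q = 0 := by
      by_contra hq0
      obtain ⟨d, hd⟩ := (support_nonempty (p := q)).mpr hq0
      have h1 := hcoeff_x q hsupp1 d hd
      rw [hxq, coeff_C, if_neg (fun h => taftShift_ne_zero d h.symm)] at h1
      obtain ⟨t, ht⟩ := hsupp d hd
      have hSd : S (d 0) ≠ 0 := by
        apply hSne
        rw [ht]
        intro hdvd
        have h1' : n ∣ 1 := (Nat.dvd_add_right (Dvd.intro t rfl)).mp hdvd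
        have := Nat.le_of_dvd one_pos h1'
        omega
      exact mem_support_iff.mp hd ((mul_eq_zero.mp h1.symm).resolve_left hSd)
    refine ⟨hq0, ?_⟩
    rw [hq0, map_zero] at hxq
    have : C r = (0 : MvPolynomial (Fin 3) k) := hxq.symm
    rwa [← C_0, C_inj] at this
  -- apply to the generator brackets
  have hB01 : B (X 0) (X 1) = 0 := by
    have hgq : g (B (X 0) (X 1)) = l • B (X 0) (X 1) := by
      rw [hgB, hg0, hg1, hB_smull]
    have hxq : x (B (X 0) (X 1)) = C 0 := by
      rw [hxB, hx1', hx0, hB0r, hBdiag, add_zero, map_zero]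
    exact (key _ 0 hgq hxq).1
  obtain ⟨r, hr⟩ := hconst
  have hB02 : B (X 0) (X 2) = 0 ∧ r = 0 := by
    apply key
    · rw [hgB, hg0, hg2, hB_smull]
    · rw [hxB, hx2', hx0, hB0r, zero_add, hr]
  have hB12 : B (X 1) (X 2) = 0 := by rw [hr, hB02.2, map_zero]
  have genzero : ∀ i j : Fin 3, B (X i) (X j) = 0 := by
    intro i j
    fin_cases i <;> fin_cases j
    · exact hBdiag _
    · exact hB01
    · exact hB02.1
    · exact (hB_anti _ _).trans (neg_eq_zero.mpr hB01)
    · exact hBdiag _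
    · exact hB12
    · exact (hB_anti _ _).trans (neg_eq_zero.mpr hB02.1)
    · exact (hB_anti _ _).trans (neg_eq_zero.mpr hB12)
    · exact hBdiag _
  have hXall : ∀ (i : Fin 3) (p : MvPolynomial (Fin 3) k), B (X i) p = 0 := by
    intro i p
    induction p using MvPolynomial.induction_on with
    | C c => exact hBCr _ c
    | add p q hp hq => rw [hB_addr, hp, hq, add_zero]
    | mul_X p j hp => rw [hB_leib, hp, genzero, zero_mul, mul_zero, add_zero]
  refine ⟨genzero, ?_⟩
  intro p q
  induction p using MvPolynomial.induction_on with
  | C c => rw [hB_anti, hBCr, neg_zero]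
  | add p1 p2 h1 h2 => rw [hB_addl, h1, h2, add_zero]
  | mul_X p1 j h1 =>
    have e1 : B q p1 = 0 := by rw [hB_anti, h1, neg_zero]
    have e2 : B q (X j) = 0 := by rw [hB_anti, hXall, neg_zero]
    rw [hB_anti, hB_leib, e1, e2, zero_mul, mul_zero, add_zero, neg_zero]
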